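/- Let χ be a real Dirichlet character modulo N, and for each positive integer n set c_n = ∑_{d ∣ n} χ(d). Then the series ∑_{n=1}^∞ c_n · n^{-1/2} diverges (the nonnegative terms c_n · n^{-1/2} are not summable). -/

import Mathlib

/-!
Write `c = 1 * χ` (Dirichlet convolution), a multiplicative function. A real character takes
only the values `0, ±1`, so at an even prime power `c (p ^ (2k)) = ∑_{i ≤ 2k} χ(p)^i` is `1`,
`2k + 1` or `1`; hence `c (m ^ 2) ≥ 1` for every `m ≥ 1`. The terms of the series at the squares
`n = m ^ 2` are therefore at least `1 / m`, and the harmonic series diverges.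
-/

open Finset ArithmeticFunction

namespace DirichletCharacter

variable {N : ℕ}

lemma isQuadratic_of_im_eq_zero [NeZero N] (χ : DirichletCharacter ℂ N)
    (hreal : ∀ x : ZMod N, (χ x).im = 0) : χ.IsQuadratic := by
  intro x
  by_cases hx : IsUnit x
  · have hnorm : ‖χ x‖ = 1 := by simpa only [hx.unit_spec] using χ.unit_norm_eq_one hx.unit
    have hre : χ x = ((χ x).re : ℂ) := Complex.ext rfl (by simp [hreal x])
    rw [hre, Complex.norm_real, Real.norm_eq_abs] at hnorm
    rcases abs_eq zero_le_one |>.mp hnorm with h | h <;> rw [hre, h] <;> norm_num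
  · exact Or.inl (χ.map_nonunit hx)

lemma zetaMul_apply (χ : DirichletCharacter ℂ N) (n : ℕ) :
    χ.zetaMul n = ∑ d ∈ n.divisors, χ d := by
  rw [zetaMul, coe_zeta_mul_apply]
  exact sum_congr rfl fun d hd ↦ (χ.apply_eq_toArithmeticFunction_apply
    (Nat.pos_of_mem_divisors hd).ne').symm

lemma zetaMul_prime_pow (χ : DirichletCharacter ℂ N) {p : ℕ} (hp : p.Prime) (k : ℕ) :
    χ.zetaMul (p ^ k) = ∑ i ∈ range (k + 1), χ p ^ i := by
  simp only [zetaMul_apply, Nat.sum_divisors_prime_pow hp, Nat.cast_pow, map_pow]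

lemma one_le_norm_zetaMul_prime_pow_two_mul {χ : DirichletCharacter ℂ N} (hχ : χ.IsQuadratic)
    {p : ℕ} (hp : p.Prime) (k : ℕ) : 1 ≤ ‖χ.zetaMul (p ^ (2 * k))‖ := by
  rw [zetaMul_prime_pow χ hp]
  rcases hχ p with h | h | h <;> rw [h]
  · simp [zero_geom_sum]
  · simp only [one_pow, sum_const, card_range, nsmul_eq_mul, mul_one, Complex.norm_natCast]
    exact_mod_cast Nat.le_add_left 1 _
  · simp [neg_one_geom_sum]

lemma one_le_norm_zetaMul_sq {χ : DirichletCharacter ℂ N} (hχ : χ.IsQuadratic) {m : ℕ}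
    (hm : m ≠ 0) : 1 ≤ ‖χ.zetaMul (m ^ 2)‖ := by
  rw [χ.isMultiplicative_zetaMul.multiplicative_factorization _ (pow_ne_zero 2 hm),
    Finsupp.prod, norm_prod]
  refine one_le_prod fun p hp ↦ ?_
  rw [Nat.support_factorization] at hp
  rw [Nat.factorization_pow, Finsupp.smul_apply, smul_eq_mul]
  exact one_le_norm_zetaMul_prime_pow_two_mul hχ (Nat.prime_of_mem_primeFactors hp) _

end DirichletCharacter

lemma not_LSeriesSummable_of_one_le_norm_sq {a : ℕ → ℂ} (ha : ∀ m ≠ 0, 1 ≤ ‖a (m ^ 2)‖)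
    {s : ℂ} (hs : s.re ≤ 1 / 2) : ¬ LSeriesSummable a s := by
  intro h
  replace h : LSeriesSummable a (1 / 2) := h.of_re_le_re (by simpa using hs)
  have hsq : Summable fun m : ℕ ↦ ‖LSeries.term a (1 / 2) (m ^ 2)‖ :=
    h.norm.comp_injective (Nat.pow_left_injective two_ne_zero)
  refine Real.not_summable_one_div_natCast (hsq.of_nonneg_of_le (fun _ ↦ by positivity) ?_)
  intro m
  rcases eq_or_ne m 0 with rfl | hm
  · simp
  have hsqrt : ((m ^ 2 : ℕ) : ℝ) ^ (1 / 2 : ℂ).re = m := by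
    rw [show (1 / 2 : ℂ).re = 1 / 2 by norm_num, Nat.cast_pow, ← Real.sqrt_eq_rpow,
      Real.sqrt_sq (Nat.cast_nonneg m)]
  rw [LSeries.norm_term_eq, if_neg (pow_ne_zero 2 hm), hsqrt]
  exact div_le_div_of_nonneg_right (ha m hm) (Nat.cast_nonneg m)

/-- For a real Dirichlet character `χ` mod `N` with coefficients
`c n = ∑_{d ∣ n} χ(d)`, the series `∑_{n=1}^∞ c n · n^{-1/2}` diverges
(its terms are not summable). -/
theorem not_summable_coeff_rpow_neg_half {N : ℕ} [NeZero N]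
    (χ : DirichletCharacter ℂ N) (hreal : ∀ x : ZMod N, (χ x).im = 0)
    (c : ℕ → ℂ) (hc : ∀ n, c n = ∑ d ∈ n.divisors, χ (d : ZMod N)) :
    ¬ Summable (fun n : ℕ => c (n + 1) * ((n : ℂ) + 1) ^ (-(1 / 2 : ℂ))) := by
  obtain rfl : c = χ.zetaMul := funext fun n ↦ (hc n).trans (χ.zetaMul_apply n).symm
  have hχ := χ.isQuadratic_of_im_eq_zero hreal
  intro h
  refine not_LSeriesSummable_of_one_le_norm_sq (fun m hm ↦ χ.one_le_norm_zetaMul_sq hχ hm)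
    (s := 1 / 2) (by norm_num) ?_
  rw [LSeriesSummable, ← summable_nat_add_iff 1]
  refine h.congr fun n ↦ ?_
  rw [LSeries.term_of_ne_zero n.succ_ne_zero, Complex.cpow_neg, div_eq_mul_inv]
  push_cast
  rfl
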